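/- Suppose ψ : [0, T₁] → [1, ∞) is continuous and satisfies ψ(t) ≤ exp{C exp{C ∫₀ᵗ ψ(s)^α ds}} for all t ∈ [0, T₁], where C > 0 and α > 1. Then with M = e^{Ce} and T₀ = min{T₁, (C M^α)^{-1}}, one has sup_{0 ≤ t ≤ T₀} ψ(t) ≤ M. -/

import Mathlib

open MeasureTheory

/-- the bootstrap argument closing the a priori estimates
(proof of Proposition 3.1). -/
theorem stmt_5 (T₁ C α : ℝ) (hT₁ : 0 < T₁) (hC : 0 < C) (hα : 1 < α)
    (ψ : ℝ → ℝ) (hcont : ContinuousOn ψ (Set.Icc 0 T₁))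
    (hψ1 : ∀ t ∈ Set.Icc 0 T₁, 1 ≤ ψ t)
    (hineq : ∀ t ∈ Set.Icc 0 T₁,
      ψ t ≤ Real.exp (C * Real.exp (C * ∫ s in (0 : ℝ)..t, ψ s ^ α))) :
    ∀ t ∈ Set.Icc 0 (min T₁ (C * Real.exp (C * Real.exp 1) ^ α)⁻¹),
      ψ t ≤ Real.exp (C * Real.exp 1) := by
  set M : ℝ := Real.exp (C * Real.exp 1) with hMdef
  have he1 : (1:ℝ) ≤ Real.exp 1 := (Real.one_le_exp (by norm_num))
  have hM1 : 1 ≤ M := Real.one_le_exp (by positivity)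
  have hM0 : 0 < M := lt_of_lt_of_le one_pos hM1
  have hMα : 0 < M ^ α := Real.rpow_pos_of_pos hM0 α
  set T₀ : ℝ := min T₁ (C * M ^ α)⁻¹ with hT₀def
  have hT₀pos : 0 < T₀ := lt_min hT₁ (by positivity)
  have hT₀T₁ : T₀ ≤ T₁ := min_le_left _ _
  have hT₀le : T₀ ≤ (C * M ^ α)⁻¹ := min_le_right _ _
  -- the key estimate
  have key : ∀ t ∈ Set.Icc (0:ℝ) T₀, (∀ s ∈ Set.Icc (0:ℝ) t, ψ s ≤ M) →
      ψ t ≤ Real.exp (C * Real.exp (C * (t * M ^ α))) := by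
    intro t ht hb
    have ht0 : 0 ≤ t := ht.1
    have htT₁ : t ≤ T₁ := ht.2.trans hT₀T₁
    have hsub : Set.Icc (0:ℝ) t ⊆ Set.Icc 0 T₁ := Set.Icc_subset_Icc le_rfl htT₁
    have hint : IntervalIntegrable (fun s => ψ s ^ α) volume 0 t := by
      apply ContinuousOn.intervalIntegrable
      rw [Set.uIcc_of_le ht0]
      exact (hcont.mono hsub).rpow_const (fun x hx => Or.inr (by linarith))
    have hIle : (∫ s in (0:ℝ)..t, ψ s ^ α) ≤ t * M ^ α := by
      have h2 : (∫ s in (0:ℝ)..t, ψ s ^ α) ≤ ∫ s in (0:ℝ)..t, M ^ α := by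
        apply intervalIntegral.integral_mono_on ht0 hint intervalIntegrable_const
        intro x hx
        exact Real.rpow_le_rpow (le_trans zero_le_one (hψ1 x (hsub hx))) (hb x hx)
          (le_of_lt (lt_trans one_pos hα))
      simpa [mul_comm] using h2
    calc ψ t ≤ Real.exp (C * Real.exp (C * ∫ s in (0:ℝ)..t, ψ s ^ α)) :=
          hineq t ⟨ht0, htT₁⟩
      _ ≤ Real.exp (C * Real.exp (C * (t * M ^ α))) := by
          apply Real.exp_le_exp.mpr
          apply mul_le_mul_of_nonneg_left _ hC.le
          exact Real.exp_le_exp.mpr (mul_le_mul_of_nonneg_left hIle hC.le)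
  -- the bootstrap set
  set S : Set ℝ := {t | t ∈ Set.Icc (0:ℝ) T₀ ∧ ∀ s ∈ Set.Icc (0:ℝ) t, ψ s ≤ M} with hSdef
  have h0S : (0:ℝ) ∈ S := by
    refine ⟨⟨le_rfl, hT₀pos.le⟩, ?_⟩
    intro s hs
    have hs0 : s = 0 := le_antisymm hs.2 hs.1
    subst hs0
    have := hineq 0 ⟨le_rfl, hT₁.le⟩
    simp only [intervalIntegral.integral_same, mul_zero, Real.exp_zero, mul_one] at this
    exact this.trans (Real.exp_le_exp.mpr (by nlinarith))
  have hSbdd : BddAbove S := ⟨T₀, fun x hx => hx.1.2⟩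
  have hSne : S.Nonempty := ⟨0, h0S⟩
  set t₀ : ℝ := sSup S with ht₀def
  have ht₀0 : 0 ≤ t₀ := le_csSup hSbdd h0S
  have ht₀T₀ : t₀ ≤ T₀ := csSup_le hSne (fun x hx => hx.1.2)
  have ht₀T₁ : t₀ ≤ T₁ := ht₀T₀.trans hT₀T₁
  -- ψ ≤ M strictly below t₀
  have hlt : ∀ s, 0 ≤ s → s < t₀ → ψ s ≤ M := by
    intro s hs0 hst
    obtain ⟨u, huS, hsu⟩ := exists_lt_of_lt_csSup hSne hst
    exact huS.2 s ⟨hs0, hsu.le⟩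
  -- ψ t₀ ≤ M by continuity
  have ht₀M : ψ t₀ ≤ M := by
    by_contra hcon
    push_neg at hcon
    have hmem : t₀ ∈ Set.Icc (0:ℝ) T₁ := ⟨ht₀0, ht₀T₁⟩
    have hcw := hcont t₀ hmem
    rw [Metric.continuousWithinAt_iff] at hcw
    obtain ⟨δ, hδ0, hδ⟩ := hcw (ψ t₀ - M) (by linarith)
    have ht₀pos : 0 < t₀ := by
      rcases lt_or_eq_of_le ht₀0 with h | h
      · exact h
      · exfalso; rw [← h] at hcon
        exact absurd (h0S.2 0 ⟨le_rfl, le_rfl⟩) (not_le.mpr hcon)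
    set s : ℝ := max 0 (t₀ - δ/2) with hsdef
    have hs0 : 0 ≤ s := le_max_left _ _
    have hst₀ : s < t₀ := max_lt ht₀pos (by linarith)
    have hsmem : s ∈ Set.Icc (0:ℝ) T₁ := ⟨hs0, hst₀.le.trans ht₀T₁⟩
    have hdist : dist s t₀ < δ := by
      rw [Real.dist_eq, abs_of_nonpos (by linarith)]
      have : t₀ - δ/2 ≤ s := le_max_right _ _
      linarith
    have := hδ hsmem hdist
    rw [Real.dist_eq] at this
    have hψs := hlt s hs0 hst₀
    have := abs_lt.mp this
    linarith [this.1]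
  have hM_on : ∀ s ∈ Set.Icc (0:ℝ) t₀, ψ s ≤ M := by
    intro s hs
    rcases lt_or_eq_of_le hs.2 with h | h
    · exact hlt s hs.1 h
    · rw [h]; exact ht₀M
  -- t₀ = T₀
  have ht₀eq : t₀ = T₀ := by
    by_contra hne
    have ht₀lt : t₀ < T₀ := lt_of_le_of_ne ht₀T₀ hne
    -- strict improvement at t₀
    have hstrict : ψ t₀ < M := by
      have h1 := key t₀ ⟨ht₀0, ht₀T₀⟩ hM_on
      have h2 : t₀ * M ^ α < (C * M ^ α)⁻¹ * M ^ α :=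
        mul_lt_mul_of_pos_right (lt_of_lt_of_le ht₀lt hT₀le) hMα
      have h3 : (C * M ^ α)⁻¹ * M ^ α = C⁻¹ := by
        field_simp
      have h4 : C * (t₀ * M ^ α) < 1 := by
        rw [h3] at h2
        have := mul_lt_mul_of_pos_left h2 hC
        rwa [mul_inv_cancel₀ hC.ne'] at this
      have h5 : Real.exp (C * (t₀ * M ^ α)) < Real.exp 1 := Real.exp_lt_exp.mpr h4
      have h6 : C * Real.exp (C * (t₀ * M ^ α)) < C * Real.exp 1 :=
        mul_lt_mul_of_pos_left h5 hC
      exact lt_of_le_of_lt h1 (Real.exp_lt_exp.mpr h6)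
    -- extend by continuity
    have hcw := hcont t₀ ⟨ht₀0, ht₀T₁⟩
    rw [Metric.continuousWithinAt_iff] at hcw
    obtain ⟨δ, hδ0, hδ⟩ := hcw (M - ψ t₀) (by linarith)
    set t : ℝ := min T₀ (t₀ + δ/2) with htdef
    have htgt : t₀ < t := lt_min ht₀lt (by linarith)
    have htS : t ∈ S := by
      refine ⟨⟨(ht₀0.trans htgt.le), min_le_left _ _⟩, ?_⟩
      intro s hs
      rcases le_or_gt s t₀ with h | h
      · exact hM_on s ⟨hs.1, h⟩
      · have hsT₁ : s ∈ Set.Icc (0:ℝ) T₁ :=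
          ⟨hs.1, hs.2.trans ((min_le_left _ _).trans hT₀T₁)⟩
        have hdist : dist s t₀ < δ := by
          rw [Real.dist_eq, abs_of_pos (by linarith)]
          have : s ≤ t₀ + δ/2 := hs.2.trans (min_le_right _ _)
          linarith
        have := abs_lt.mp ((Real.dist_eq (ψ s) (ψ t₀)) ▸ hδ hsT₁ hdist)
        linarith [this.2]
    have := le_csSup hSbdd htS
    linarith
  -- conclude
  intro t ht
  rw [← ht₀eq] at ht
  exact hM_on t ht
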